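/- Let α ∈ ℂ be algebraic over ℚ with [ℚ(α):ℚ] ≤ 2. If α^(2^n) = α for some integer n ≥ 1 (i.e., α is a periodic point of the map z ↦ z²), then α⁴ = α; that is, every periodic point of z ↦ z² lying in ℚ or a quadratic extension of ℚ has period 1 or 2. -/

import Mathlib

/-!
A nonzero periodic point `α` of `z ↦ z²` satisfies `α ^ (2 ^ n - 1) = 1`, so it is a root of unity of
odd order `m`. Its minimal polynomial over ℚ is the cyclotomic polynomial `Φ_m`, of degree `φ m`,
so `φ m ≤ 2`. The only odd `m` with `φ m ≤ 2` are `1` and `3`, hence `α ^ 3 = 1`.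
-/

open Polynomial
open scoped Nat

namespace Nat

theorem dvd_three_of_odd_of_totient_le_two {m : ℕ} (hodd : Odd m) (ht : φ m ≤ 2) : m ∣ 3 := by
  have hprime : ∀ {p : ℕ}, p.Prime → p ∣ m → p = 3 := by
    intro p hp hpm
    have hp_odd : Odd p := hodd.of_dvd_nat hpm
    have hφp : p - 1 ≤ 2 := by
      rw [← totient_prime hp]
      exact (le_of_dvd (totient_pos.mpr hodd.pos) (totient_dvd_of_dvd hpm)).trans ht
    obtain ⟨j, rfl⟩ := hp_odd
    have := hp.two_le
    omega
  obtain ⟨k, hk⟩ : ∃ k, m = 3 ^ k := ⟨_, eq_prime_pow_of_unique_prime_dvd hodd.pos.ne' hprime⟩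
  subst hk
  rcases k with _ | _ | k
  · simp
  · simp
  · rw [totient_prime_pow prime_three (by omega), Nat.add_sub_cancel] at ht
    have : 3 ≤ 3 ^ (k + 1) := Nat.le_self_pow (by omega) 3
    omega

end Nat

theorem odd_orderOf_of_pow_two_pow_eq_self {M : Type*} [MonoidWithZero M] [IsRightCancelMulZero M]
    {a : M} (ha : a ≠ 0) {n : ℕ} (hn : 1 ≤ n) (h : a ^ 2 ^ n = a) : Odd (orderOf a) := by
  have hpow : a ^ (2 ^ n - 1) = 1 := by
    have : a ^ (2 ^ n - 1) * a = a := by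
      rwa [← pow_succ, Nat.sub_add_cancel Nat.one_le_two_pow]
    exact (mul_left_eq_self₀.mp this).resolve_right ha
  have hodd : Odd (2 ^ n - 1) :=
    Nat.Even.sub_odd Nat.one_le_two_pow ((Nat.even_pow' (by omega)).mpr even_two) odd_one
  exact hodd.of_dvd_nat (orderOf_dvd_of_pow_eq_one hpow)

theorem totient_orderOf_le_natDegree {K : Type*} [Field K] [CharZero K] {α : K}
    (hα : 0 < orderOf α) {p : ℚ[X]} (hp : p ≠ 0) (hpα : aeval α p = 0) :
    φ (orderOf α) ≤ p.natDegree := by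
  rw [← natDegree_cyclotomic (orderOf α) ℚ, cyclotomic_eq_minpoly_rat (IsPrimitiveRoot.orderOf α) hα]
  exact natDegree_le_of_dvd (minpoly.dvd ℚ α hpα) hp

theorem quadratic_periodic_point_of_squaring (α : ℂ)
    (halg : ∃ p : Polynomial ℚ, p ≠ 0 ∧ p.degree ≤ 2 ∧ Polynomial.aeval α p = 0)
    (n : ℕ) (hn : 1 ≤ n) (hper : α ^ 2 ^ n = α) :
    α ^ 4 = α := by
  rcases eq_or_ne α 0 with rfl | hα
  · simp
  obtain ⟨p, hp, hpdeg, hpα⟩ := halg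
  have hodd : Odd (orderOf α) := odd_orderOf_of_pow_two_pow_eq_self hα hn hper
  have htot : φ (orderOf α) ≤ 2 :=
    (totient_orderOf_le_natDegree hodd.pos hp hpα).trans (natDegree_le_of_degree_le hpdeg)
  have hcube : α ^ 3 = 1 :=
    orderOf_dvd_iff_pow_eq_one.mp (Nat.dvd_three_of_odd_of_totient_le_two hodd htot)
  rw [pow_succ, hcube, one_mul]
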